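/- Global existence: for every t0 ∈ ℝ, every initial configuration B = (b_1, …, b_m) of pairwise distinct points of ℝ^m and every tuple of initial velocities V = (v_1, …, v_m) in ℝ^m, there exists a solution t ↦ X(t) of the system defined on all of ℝ (with pairwise distinct points for every t ∈ ℝ) satisfying x_i(t0) = b_i and x_i′(t0) = v_i for all i. -/

import Mathlib

/-- The force acting on the `i`-th point of a configuration `X` of `m` points of `ℝ^m`,
for the adjacency matrix `h`:  `F_i(X) = ∑_{k ≠ i} (x_i − x_k)·(1/‖x_i − x_k‖² − h_{ik})`. -/
noncomputable def force (m : ℕ) (h : Matrix (Fin m) (Fin m) ℝ)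
    (X : Fin m → EuclideanSpace ℝ (Fin m)) (i : Fin m) : EuclideanSpace ℝ (Fin m) :=
  ∑ k ∈ Finset.univ.filter (fun k => k ≠ i), (1 / ‖X i - X k‖ ^ 2 - h i k) • (X i - X k)

/-- `X : ℝ → (ℝ^m)^m` is a solution of the system `x_i″ = F_i(X)` on the set `S ⊆ ℝ`:
its points are pairwise distinct at every `t ∈ S`, it is differentiable at every `t ∈ S`,
and its velocity `deriv` has derivative `F_i(X(t))` at every `t ∈ S`. -/
def IsSolution (m : ℕ) (h : Matrix (Fin m) (Fin m) ℝ) (S : Set ℝ)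
    (X : ℝ → Fin m → EuclideanSpace ℝ (Fin m)) : Prop :=
  (∀ t ∈ S, ∀ i k : Fin m, i ≠ k → X t i ≠ X t k) ∧
  (∀ i : Fin m, ∀ t ∈ S, DifferentiableAt ℝ (fun s => X s i) t) ∧
  (∀ i : Fin m, ∀ t ∈ S, HasDerivAt (deriv (fun s => X s i)) (force m h (X t) i) t)

/-- Kinetic energy of a tuple of velocities: `E_k(Y) = (1/2) ∑_r ‖y_r‖²`. -/
noncomputable def kineticEnergy (m : ℕ) (Y : Fin m → EuclideanSpace ℝ (Fin m)) : ℝ :=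
  (1 / 2) * ∑ r, ‖Y r‖ ^ 2

/-- Potential energy of a configuration:
`E_p(X) = −(1/2) ∑_{r<s} (log ‖x_r − x_s‖² − h_{rs}‖x_r − x_s‖²)`. -/
noncomputable def potentialEnergy (m : ℕ) (h : Matrix (Fin m) (Fin m) ℝ)
    (X : Fin m → EuclideanSpace ℝ (Fin m)) : ℝ :=
  -(1 / 2) * ∑ p ∈ Finset.univ.filter (fun p : Fin m × Fin m => p.1 < p.2),
      (Real.log (‖X p.1 - X p.2‖ ^ 2) - h p.1 p.2 * ‖X p.1 - X p.2‖ ^ 2)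

/-!
Replace the singular kernel `v / ‖v‖²` by `v / max(ε, ‖v‖)²`. The resulting first-order system
on phase space is globally Lipschitz, so it has a global solution, and it agrees with the true
system as long as the points stay `ε` apart.

Along a true solution the energy `E_k + E_p` is conserved. As `-log d ≥ -d`, it bounds the
velocities by `‖X‖ + c`, so by Grönwall `‖X‖`, hence every distance, stays below some `D(T)` on
`[t₀ - T, t₀ + T]`. Feeding this back into the energy, whose logarithmic part blows up at
collisions, every distance stays above `δ(T) = exp(-(E + m² D(T)))`. For `ε = δ(T) / 2` a
continuity argument (forwards, and backwards by time reversal) shows that the truncated solution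
keeps its points `δ(T)` apart on `[t₀ - T, t₀ + T]`, so it solves the true system there. By
uniqueness these solutions agree on overlaps and glue to a global solution.
-/

open Set Filter Topology
open scoped NNReal RealInnerProductSpace

theorem exists_forall_eqOn_of_eqOn {ι X α : Type*} [LinearOrder ι] {s : ι → Set X}
    (hs : ∀ x, ∃ i, x ∈ s i) (f : ι → X → α) (hf : ∀ i j, i ≤ j → EqOn (f i) (f j) (s i)) :
    ∃ F : X → α, ∀ i, EqOn F (f i) (s i) := by
  choose k hk using hs
  refine ⟨fun x => f (k x) x, fun i x hx => ?_⟩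
  rcases le_total (k x) i with hki | hik
  · exact hf _ _ hki (hk x)
  · exact (hf _ _ hik hx).symm

/-- The first-order system `x' = y, y' = F x` equivalent to `x'' = F x`. -/
def phaseField {E : Type*} (F : E → E) (p : E × E) : E × E := (p.2, F p.1)

section IntegralCurve

variable {E : Type*} [NormedAddCommGroup E] [NormedSpace ℝ E] {γ γ' : ℝ → E} {v : ℝ → E → E}
  {s s' : Set ℝ}

theorem IsIntegralCurveOn.congr (hγ : IsIntegralCurveOn γ v s) (h : EqOn γ γ' s) :
    IsIntegralCurveOn γ' v s := fun t ht => by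
  rw [← h ht]
  exact (hγ t ht).congr (fun t ht => (h ht).symm) (h ht).symm

theorem IsIntegralCurveOn.union_of_isClosed (hγ : IsIntegralCurveOn γ v s)
    (hγ' : IsIntegralCurveOn γ v s') (hs : IsClosed s) (hs' : IsClosed s') :
    IsIntegralCurveOn γ v (s ∪ s') := by
  have within {u : Set ℝ} (hu : IsIntegralCurveOn γ v u) (huc : IsClosed u) (t : ℝ) :
      HasDerivWithinAt γ (v t (γ t)) u t := by
    by_cases ht : t ∈ u
    · exact hu t ht
    · exact HasFDerivWithinAt.of_notMem_closure (by rwa [huc.closure_eq])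
  exact fun t _ => (within hγ hs t).union (within hγ' hs' t)

theorem IsIntegralCurveOn.extend_Icc {γl γr : ℝ → E} {a b τ : ℝ} (hab : a ≤ b) (hτ : 0 ≤ τ)
    (hγ : IsIntegralCurveOn γ v (Icc a b))
    (hγl : IsIntegralCurveOn γl v (Icc (a - τ) a)) (ha : γl a = γ a)
    (hγr : IsIntegralCurveOn γr v (Icc b (b + τ))) (hb : γr b = γ b) :
    IsIntegralCurveOn (fun t => if t < a then γl t else if t ≤ b then γ t else γr t) v
      (Icc (a - τ) (b + τ)) := by
  set γe : ℝ → E := fun t => if t < a then γl t else if t ≤ b then γ t else γr t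
  have hl : EqOn γe γl (Icc (a - τ) a) := fun t ht => by
    rcases ht.2.lt_or_eq with hta | rfl
    · simp [γe, hta]
    · simp [γe, hab, ha]
  have h₀ : EqOn γe γ (Icc a b) := fun t ht => by simp [γe, not_lt.2 ht.1, ht.2]
  have hr : EqOn γe γr (Icc b (b + τ)) := fun t ht => by
    rcases ht.1.lt_or_eq with hbt | rfl
    · simp [γe, not_lt.2 (hab.trans hbt.le), not_le.2 hbt]
    · simp [γe, not_lt.2 hab, hb]
  rw [← Icc_union_Icc_eq_Icc (by linarith : a - τ ≤ b) (by linarith : b ≤ b + τ),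
    ← Icc_union_Icc_eq_Icc (by linarith : a - τ ≤ a) hab]
  exact ((hγl.congr hl.symm).union_of_isClosed (hγ.congr h₀.symm) isClosed_Icc
    isClosed_Icc).union_of_isClosed (hγr.congr hr.symm) (isClosed_Icc.union isClosed_Icc)
    isClosed_Icc

theorem LipschitzWith.exists_forall_isIntegralCurveOn_Icc [CompleteSpace E] {g : E → E}
    {K : ℝ≥0} (hg : LipschitzWith K g) :
    ∃ τ > 0, ∀ (s : ℝ) (x : E),
      ∃ γ : ℝ → E, γ s = x ∧ IsIntegralCurveOn γ (fun _ => g) (Icc (s - τ) (s + τ)) := by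
  have hτ : 0 < ((K : ℝ) + 1)⁻¹ := by positivity
  refine ⟨_, hτ, fun s x => ?_⟩
  -- On the ball of radius `a` around `x` the field is bounded by `(K + 1) * a`, and
  -- `(K + 1) * a` times the time step `(K + 1)⁻¹` is exactly `a`.
  set a : ℝ≥0 := ‖g x‖₊ + 1
  have hpl : IsPicardLindelof (fun _ => g) (tmin := s - ((K : ℝ) + 1)⁻¹)
      (tmax := s + ((K : ℝ) + 1)⁻¹) ⟨s, by constructor <;> linarith⟩ x a 0 ((K + 1) * a) K := by
    refine .of_time_independent (fun y hy => ?_) hg.lipschitzOnWith ?_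
    · have hy : ‖y - x‖ ≤ a := by simpa [dist_eq_norm] using hy
      have hga : ‖g x‖ ≤ a := by simp [a]
      calc ‖g y‖ ≤ ‖g x‖ + ‖g y - g x‖ := norm_le_norm_add_norm_sub' _ _
        _ ≤ ‖g x‖ + K * ‖y - x‖ := by
            gcongr; simpa [dist_eq_norm] using hg.dist_le_mul y x
        _ ≤ ((K : ℝ) + 1) * a := by nlinarith [K.2]
    · simp only [add_sub_cancel_left, sub_sub_cancel, max_self]
      push_cast
      field_simp
      simp
  exact hpl.exists_eq_forall_mem_Icc_hasDerivWithinAt₀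

theorem exists_isIntegralCurveOn_Icc_of_uniform {τ : ℝ} (hτ : 0 ≤ τ)
    (hloc : ∀ (s : ℝ) (x : E), ∃ γ : ℝ → E, γ s = x ∧ IsIntegralCurveOn γ v (Icc (s - τ) (s + τ)))
    (t₀ : ℝ) (x₀ : E) (n : ℕ) :
    ∃ γ : ℝ → E, γ t₀ = x₀ ∧ IsIntegralCurveOn γ v (Icc (t₀ - n * τ) (t₀ + n * τ)) := by
  induction n with
  | zero =>
    obtain ⟨γ, hγ₀, hγ⟩ := hloc t₀ x₀
    refine ⟨γ, hγ₀, hγ.mono ?_⟩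
    simp only [Nat.cast_zero, zero_mul, sub_zero, add_zero]
    exact Icc_subset_Icc (by linarith) (by linarith)
  | succ n ih =>
    obtain ⟨γ, hγ₀, hγ⟩ := ih
    have hn : 0 ≤ n * τ := by positivity
    obtain ⟨γl, hγl₀, hγl⟩ := hloc (t₀ - n * τ) (γ (t₀ - n * τ))
    obtain ⟨γr, hγr₀, hγr⟩ := hloc (t₀ + n * τ) (γ (t₀ + n * τ))
    have hext := hγ.extend_Icc (by linarith) hτ
      (hγl.mono (Icc_subset_Icc_right (by linarith))) hγl₀
      (hγr.mono (Icc_subset_Icc_left (by linarith))) hγr₀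
    refine ⟨_, ?_, by convert hext using 2 <;> push_cast <;> ring⟩
    rw [if_neg (by linarith), if_pos (by linarith), hγ₀]

theorem LipschitzWith.exists_isIntegralCurve [CompleteSpace E] {g : E → E} {K : ℝ≥0}
    (hg : LipschitzWith K g) (t₀ : ℝ) (x₀ : E) :
    ∃ γ : ℝ → E, γ t₀ = x₀ ∧ IsIntegralCurve γ (fun _ => g) := by
  obtain ⟨τ, hτ, hloc⟩ := hg.exists_forall_isIntegralCurveOn_Icc
  choose γ hγ₀ hγ using fun n : ℕ =>
    exists_isIntegralCurveOn_Icc_of_uniform hτ.le hloc t₀ x₀ (n + 1)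
  have hcover (t : ℝ) : ∃ n : ℕ, t ∈ Ioo (t₀ - (n + 1 : ℕ) * τ) (t₀ + (n + 1 : ℕ) * τ) := by
    obtain ⟨n, hn⟩ := exists_nat_gt (|t - t₀| / τ)
    refine ⟨n, ?_⟩
    rw [div_lt_iff₀ hτ] at hn
    have : |t - t₀| < (n + 1 : ℕ) * τ := by push_cast; nlinarith
    constructor <;> linarith [(abs_lt.1 this).1, (abs_lt.1 this).2]
  have hderiv {n : ℕ} {t : ℝ} (ht : t ∈ Ioo (t₀ - (n + 1 : ℕ) * τ) (t₀ + (n + 1 : ℕ) * τ)) :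
      HasDerivAt (γ n) (g (γ n t)) t :=
    ((hγ n).isIntegralCurveAt (Icc_mem_nhds ht.1 ht.2)).hasDerivAt
  obtain ⟨F, hF⟩ := exists_forall_eqOn_of_eqOn hcover γ fun i j hij => by
    have hsub : Ioo (t₀ - (i + 1 : ℕ) * τ) (t₀ + (i + 1 : ℕ) * τ) ⊆
        Ioo (t₀ - (j + 1 : ℕ) * τ) (t₀ + (j + 1 : ℕ) * τ) := by
      have : ((i + 1 : ℕ) : ℝ) * τ ≤ (j + 1 : ℕ) * τ := by gcongr
      exact Ioo_subset_Ioo (by linarith) (by linarith)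
    refine ODE_solution_unique_of_mem_Ioo (s := fun _ => univ) (fun _ _ => hg.lipschitzOnWith)
      ?_ (fun t ht => ⟨hderiv ht, trivial⟩) (fun t ht => ⟨hderiv (hsub ht), trivial⟩)
      ((hγ₀ i).trans (hγ₀ j).symm)
    have : (0 : ℝ) < (i + 1 : ℕ) * τ := by positivity
    constructor <;> linarith
  refine ⟨F, ?_, fun t => ?_⟩
  · obtain ⟨n, hn⟩ := hcover t₀
    exact (hF n hn).trans (hγ₀ n)
  · obtain ⟨n, hn⟩ := hcover t
    have hFn : F =ᶠ[𝓝 t] γ n := (hF n).eventuallyEq_of_mem (isOpen_Ioo.mem_nhds hn)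
    rw [hFn.eq_of_nhds]
    exact (hderiv hn).congr_of_eventuallyEq hFn

theorem IsIntegralCurve.phaseField_reverse {F : E → E} {γ : ℝ → E × E}
    (hγ : IsIntegralCurve γ fun _ => phaseField F) :
    IsIntegralCurve (fun t => ((γ (-t)).1, -(γ (-t)).2)) fun _ => phaseField F := fun t => by
  have h := (hγ (-t)).scomp t (hasDerivAt_neg t)
  have h1 := hasFDerivAt_fst.comp_hasDerivAt t h
  have h2 := (hasFDerivAt_snd.comp_hasDerivAt t h).neg
  simpa [phaseField, Function.comp_def] using h1.prodMk h2

end IntegralCurve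

theorem Icc_subset_of_bootstrap {A O : Set ℝ} {a b : ℝ} (hA : IsClosed A) (hO : IsOpen O)
    (hAO : A ⊆ O) (ha : a ∈ A) (hstep : ∀ u ∈ Icc a b, Icc a u ⊆ O → u ∈ A) :
    Icc a b ⊆ A := by
  suffices hIcc : Icc a b ⊆ O from
    fun u hu => hstep u hu ((Icc_subset_Icc_right hu.2).trans hIcc)
  by_contra hnot
  -- `u` is the first point of `[a, b]` outside `O`: the step hypothesis applies before `u`,
  -- so `u ∈ A ⊆ O` because `A` is closed
  have hZ : IsClosed (Icc a b \ O) := isClosed_Icc.sdiff hO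
  have hZne : (Icc a b \ O).Nonempty := sdiff_nonempty.2 hnot
  have hZb : BddBelow (Icc a b \ O) := ⟨a, fun t ht => ht.1.1⟩
  have hu := hZ.csInf_mem hZne hZb
  set u := sInf (Icc a b \ O)
  have hbefore : Ico a u ⊆ O := fun t ht => by
    by_contra htO
    exact (csInf_le hZb ⟨⟨ht.1, ht.2.le.trans hu.1.2⟩, htO⟩).not_gt ht.2
  have hA_before : Ico a u ⊆ A := fun t ht =>
    hstep t ⟨ht.1, ht.2.le.trans hu.1.2⟩ fun s hs => hbefore ⟨hs.1, hs.2.trans_lt ht.2⟩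
  have huA : u ∈ A := by
    rcases hu.1.1.eq_or_lt with hau | hau
    · exact hau ▸ ha
    · refine hA.closure_subset_iff.2 hA_before ?_
      rw [closure_Ico hau.ne]
      exact ⟨hau.le, le_rfl⟩
  exact hu.2 (hAO huA)

section Separation

variable {ι E : Type*} [SeminormedAddCommGroup E] {x : ℝ → ι → E}

theorem isClosed_setOf_pairwise_le_norm_sub (hx : Continuous x) (δ : ℝ) :
    IsClosed {t | Pairwise fun i j => δ ≤ ‖x t i - x t j‖} := by
  simp only [Pairwise, ofPred_forall]
  exact isClosed_iInter fun i => isClosed_iInter fun j => isClosed_iInter fun _ =>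
    isClosed_le continuous_const (by fun_prop)

theorem isOpen_setOf_pairwise_lt_norm_sub [Finite ι] (hx : Continuous x) (ε : ℝ) :
    IsOpen {t | Pairwise fun i j => ε < ‖x t i - x t j‖} := by
  simp only [Pairwise, ofPred_forall]
  exact isOpen_iInter_of_finite fun i => isOpen_iInter_of_finite fun j =>
    isOpen_iInter_of_finite fun _ => isOpen_lt continuous_const (by fun_prop)

theorem Pairwise.ne_of_le_norm_sub {y : ι → E} {δ : ℝ} (hδ : 0 < δ)
    (hy : Pairwise fun i j => δ ≤ ‖y i - y j‖) : Pairwise fun i j => y i ≠ y j :=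
  fun _ _ hij heq => (hδ.trans_le (hy hij)).ne' (by rw [heq, sub_self, norm_zero])

theorem norm_sub_le_two_mul_norm [Fintype ι] (y : ι → E) (i j : ι) : ‖y i - y j‖ ≤ 2 * ‖y‖ := by
  linarith [norm_sub_le (y i) (y j), norm_le_pi_norm y i, norm_le_pi_norm y j]

end Separation

theorem Finset.sum_filter_lt_add_swap {ι M : Type*} [Fintype ι] [LinearOrder ι] [AddCommMonoid M]
    (f : ι → ι → M) :
    ∑ p ∈ univ.filter (fun p : ι × ι => p.1 < p.2), (f p.1 p.2 + f p.2 p.1) =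
      ∑ i, ∑ k ∈ univ.filter (fun k => k ≠ i), f i k := by
  have hswap : ∑ p ∈ univ.filter (fun p : ι × ι => p.1 < p.2), f p.2 p.1 =
      ∑ p ∈ univ.filter (fun p : ι × ι => p.2 < p.1), f p.1 p.2 :=
    Finset.sum_equiv (Equiv.prodComm ι ι) (by simp) (by simp)
  rw [Finset.sum_add_distrib, hswap, Finset.sum_filter, Finset.sum_filter, ← Finset.sum_add_distrib,
    ← Finset.univ_product_univ, Finset.sum_product]
  refine Finset.sum_congr rfl fun i _ => ?_
  rw [Finset.sum_filter]
  refine Finset.sum_congr rfl fun k _ => ?_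
  rcases lt_trichotomy i k with h | rfl | h
  · simp [h, h.ne', h.not_gt]
  · simp
  · simp [h, h.ne, h.not_gt]

theorem LipschitzWith.pi {α ι : Type*} {β : ι → Type*} [PseudoEMetricSpace α] [Fintype ι]
    [∀ i, PseudoEMetricSpace (β i)] {f : α → ∀ i, β i} {K : ι → ℝ≥0}
    (hf : ∀ i, LipschitzWith (K i) fun x => f x i) : LipschitzWith (Finset.univ.sup K) f :=
  fun x y => edist_pi_le_iff.2 fun i => (hf i x y).trans <| by
    gcongr; exact Finset.le_sup (Finset.mem_univ i)

theorem LipschitzWith.finset_sum {α ι E : Type*} [PseudoEMetricSpace α] [SeminormedAddCommGroup E]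
    {f : ι → α → E} {K : ι → ℝ≥0} (s : Finset ι) (hf : ∀ i ∈ s, LipschitzWith (K i) (f i)) :
    LipschitzWith (∑ i ∈ s, K i) fun x => ∑ i ∈ s, f i x := by
  classical
  induction s using Finset.induction_on with
  | empty => simpa using LipschitzWith.const (0 : E)
  | insert i s hi ih =>
    simp only [Finset.sum_insert hi]
    exact (hf i (by simp)).add (ih fun j hj => hf j (by simp [hj]))

section Truncation

variable {E : Type*} [SeminormedAddCommGroup E] [NormedSpace ℝ E]

noncomputable def truncatedInvSq (ε : ℝ) (v : E) : E := (max ε ‖v‖ ^ 2)⁻¹ • v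

theorem truncatedInvSq_of_le {ε : ℝ} {v : E} (hv : ε ≤ ‖v‖) :
    truncatedInvSq ε v = (‖v‖ ^ 2)⁻¹ • v := by
  rw [truncatedInvSq, max_eq_right hv]

theorem norm_truncatedInvSq_sub_le {ε : ℝ} (hε : 0 < ε) (u v : E) :
    ‖truncatedInvSq ε u - truncatedInvSq ε v‖ ≤ 3 / ε ^ 2 * ‖u - v‖ := by
  set a := max ε ‖u‖
  set b := max ε ‖v‖
  have ha : ε ≤ a := le_max_left _ _
  have hb : ε ≤ b := le_max_left _ _
  have hvb : ‖v‖ ≤ b := le_max_right _ _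
  have hab : |a - b| ≤ ‖u - v‖ := by
    simpa only [a, b, max_comm ε] using
      (abs_max_sub_max_le_abs _ _ ε).trans (abs_norm_sub_norm_le u v)
  have hsplit : truncatedInvSq ε u - truncatedInvSq ε v =
      (a ^ 2)⁻¹ • (u - v) + ((a ^ 2)⁻¹ - (b ^ 2)⁻¹) • v := by
    simp only [truncatedInvSq, smul_sub, sub_smul, a, b]; abel
  -- `|a⁻² - b⁻²| * b = |a - b| * (1 / (a * b) + 1 / a ^ 2)` and both fractions are at most `ε⁻²`
  have hcoef : |(a ^ 2)⁻¹ - (b ^ 2)⁻¹| * b ≤ 2 / ε ^ 2 * |a - b| := by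
    have hε2 : 0 < ε ^ 2 := by positivity
    have ha0 : 0 < a := hε.trans_le ha
    have hb0 : 0 < b := hε.trans_le hb
    have key : |(a ^ 2)⁻¹ - (b ^ 2)⁻¹| * b = |a - b| * (1 / (a * b) + 1 / a ^ 2) := by
      rw [show (a ^ 2)⁻¹ - (b ^ 2)⁻¹ = (b - a) * ((a + b) / (a ^ 2 * b ^ 2)) by field_simp; ring,
        abs_mul, abs_sub_comm, abs_of_pos (by positivity : 0 < (a + b) / (a ^ 2 * b ^ 2))]
      field_simp
    rw [key, mul_comm]
    gcongr
    calc 1 / (a * b) + 1 / a ^ 2 ≤ 1 / ε ^ 2 + 1 / ε ^ 2 := by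
          gcongr
          nlinarith
      _ = 2 / ε ^ 2 := by ring
  calc ‖truncatedInvSq ε u - truncatedInvSq ε v‖
      ≤ (a ^ 2)⁻¹ * ‖u - v‖ + |(a ^ 2)⁻¹ - (b ^ 2)⁻¹| * ‖v‖ := by
        rw [hsplit]
        refine (norm_add_le _ _).trans_eq ?_
        rw [norm_smul, norm_smul, Real.norm_eq_abs, Real.norm_eq_abs, abs_of_pos (by positivity)]
    _ ≤ (ε ^ 2)⁻¹ * ‖u - v‖ + 2 / ε ^ 2 * ‖u - v‖ := by
        refine add_le_add (by gcongr) ?_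
        calc |(a ^ 2)⁻¹ - (b ^ 2)⁻¹| * ‖v‖ ≤ |(a ^ 2)⁻¹ - (b ^ 2)⁻¹| * b := by gcongr
          _ ≤ 2 / ε ^ 2 * ‖u - v‖ := hcoef.trans (by gcongr)
    _ = 3 / ε ^ 2 * ‖u - v‖ := by ring

theorem lipschitzWith_truncatedInvSq {ε : ℝ} (hε : 0 < ε) :
    LipschitzWith (Real.toNNReal (3 / ε ^ 2)) (truncatedInvSq (E := E) ε) :=
  LipschitzWith.of_dist_le' fun u v => by
    simpa only [dist_eq_norm] using norm_truncatedInvSq_sub_le hε u v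

end Truncation

section Model

abbrev Configuration (m : ℕ) := Fin m → EuclideanSpace ℝ (Fin m)

noncomputable def cutoffForce (m : ℕ) (h : Matrix (Fin m) (Fin m) ℝ) (ε : ℝ)
    (X : Configuration m) (i : Fin m) : EuclideanSpace ℝ (Fin m) :=
  ∑ k ∈ Finset.univ.filter (fun k => k ≠ i), (truncatedInvSq ε (X i - X k) - h i k • (X i - X k))

abbrev orderedPairs (m : ℕ) : Finset (Fin m × Fin m) := Finset.univ.filter fun p => p.1 < p.2

noncomputable def totalEnergy (m : ℕ) (h : Matrix (Fin m) (Fin m) ℝ)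
    (p : Configuration m × Configuration m) : ℝ :=
  kineticEnergy m p.2 + potentialEnergy m h p.1

variable {m : ℕ} {h : Matrix (Fin m) (Fin m) ℝ}

theorem cutoffForce_eq_force {ε : ℝ} {X : Configuration m}
    (hX : Pairwise fun r s => ε ≤ ‖X r - X s‖) : cutoffForce m h ε X = force m h X := by
  ext1 i
  refine Finset.sum_congr rfl fun k hk => ?_
  rw [truncatedInvSq_of_le (hX (Finset.mem_filter.1 hk).2.symm), sub_smul, one_div]

theorem exists_lipschitzWith_phaseField_cutoffForce {ε : ℝ} (hε : 0 < ε) :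
    ∃ K, LipschitzWith K (phaseField (cutoffForce m h ε)) := by
  have heval (i : Fin m) : LipschitzWith 1 fun X : Configuration m => X i :=
    LipschitzWith.eval (α := fun _ => EuclideanSpace ℝ (Fin m)) i
  have hforce (i : Fin m) : ∃ K, LipschitzWith K fun X => cutoffForce m h ε X i :=
    ⟨_, LipschitzWith.finset_sum (Finset.univ.filter (fun k => k ≠ i))
      fun k _ => ((lipschitzWith_truncatedInvSq hε).comp ((heval i).sub (heval k))).sub
        ((lipschitzWith_smul (h i k)).comp ((heval i).sub (heval k)))⟩
  choose K hK using hforce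
  exact ⟨_, LipschitzWith.prod_snd.prodMk ((LipschitzWith.pi hK).comp LipschitzWith.prod_fst)⟩

theorem sum_inner_force (hsymm : ∀ i k, h i k = h k i) (X V : Configuration m) :
    ∑ r, ⟪force m h X r, V r⟫ = ∑ p ∈ orderedPairs m,
      (1 / ‖X p.1 - X p.2‖ ^ 2 - h p.1 p.2) * ⟪X p.1 - X p.2, V p.1 - V p.2⟫ := by
  set f : Fin m → Fin m → ℝ := fun r k => (1 / ‖X r - X k‖ ^ 2 - h r k) * ⟪X r - X k, V r⟫
  calc ∑ r, ⟪force m h X r, V r⟫ = ∑ r, ∑ k ∈ Finset.univ.filter (· ≠ r), f r k := by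
        simp only [force, sum_inner, real_inner_smul_left, f]
    _ = ∑ p ∈ orderedPairs m, (f p.1 p.2 + f p.2 p.1) := (Finset.sum_filter_lt_add_swap f).symm
    _ = _ := Finset.sum_congr rfl fun p _ => by
        simp only [f]
        rw [norm_sub_rev (X p.2), hsymm p.2 p.1, ← neg_sub (X p.1), inner_neg_left,
          inner_sub_right]
        ring

theorem hasDerivAt_totalEnergy {γ : ℝ → Configuration m × Configuration m}
    {γ' : Configuration m × Configuration m} {t : ℝ} (hγ : HasDerivAt γ γ' t)
    (hdist : Pairwise fun r s => (γ t).1 r ≠ (γ t).1 s) :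
    HasDerivAt (fun s => totalEnergy m h (γ s))
      (∑ r, ⟪(γ t).2 r, γ'.2 r⟫ - ∑ p ∈ orderedPairs m,
        (1 / ‖(γ t).1 p.1 - (γ t).1 p.2‖ ^ 2 - h p.1 p.2) *
          ⟪(γ t).1 p.1 - (γ t).1 p.2, γ'.1 p.1 - γ'.1 p.2⟫) t := by
  have hX : HasDerivAt (fun s => (γ s).1) γ'.1 t :=
    (hasFDerivAt_fst (𝕜 := ℝ) (p := γ t)).comp_hasDerivAt t hγ
  have hY : HasDerivAt (fun s => (γ s).2) γ'.2 t :=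
    (hasFDerivAt_snd (𝕜 := ℝ) (p := γ t)).comp_hasDerivAt t hγ
  have hK := (HasDerivAt.fun_sum (u := Finset.univ) fun r _ =>
    (hasDerivAt_pi.1 hY r).norm_sq).const_mul (1 / 2)
  have hP := (HasDerivAt.fun_sum (u := orderedPairs m) fun p hp =>
    have hd := (hasDerivAt_pi.1 hX p.1).fun_sub (hasDerivAt_pi.1 hX p.2)
    (hd.norm_sq.log (by simpa [sub_eq_zero] using hdist (Finset.mem_filter.1 hp).2.ne)).fun_sub
      (hd.norm_sq.const_mul (h p.1 p.2))).const_mul (-(1 / 2))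
  refine (hK.fun_add hP).congr_deriv ?_
  rw [sub_eq_add_neg, Finset.mul_sum, Finset.mul_sum, ← Finset.sum_neg_distrib]
  congr 1 <;> refine Finset.sum_congr rfl fun _ _ => by field_simp

theorem hasDerivAt_totalEnergy_of_newton (hsymm : ∀ i k, h i k = h k i)
    {γ : ℝ → Configuration m × Configuration m} {t : ℝ}
    (hγ : HasDerivAt γ (phaseField (force m h) (γ t)) t)
    (hdist : Pairwise fun r s => (γ t).1 r ≠ (γ t).1 s) :
    HasDerivAt (fun s => totalEnergy m h (γ s)) 0 t := by
  simpa only [phaseField, real_inner_comm, sum_inner_force hsymm, sub_self] using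
    hasDerivAt_totalEnergy (h := h) hγ hdist

theorem totalEnergy_eq_of_newton (hsymm : ∀ i k, h i k = h k i)
    {γ : ℝ → Configuration m × Configuration m} {a b : ℝ}
    (hγ : ∀ t ∈ Icc a b, HasDerivAt γ (phaseField (force m h) (γ t)) t)
    (hdist : ∀ t ∈ Icc a b, Pairwise fun r s => (γ t).1 r ≠ (γ t).1 s) :
    ∀ t ∈ Icc a b, totalEnergy m h (γ t) = totalEnergy m h (γ a) :=
  have hE {t} (ht : t ∈ Icc a b) := hasDerivAt_totalEnergy_of_newton hsymm (hγ t ht) (hdist t ht)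
  constant_of_has_deriv_right_zero (fun _ ht => (hE ht).continuousAt.continuousWithinAt)
    fun _ ht => (hE (Ico_subset_Icc_self ht)).hasDerivWithinAt

theorem card_orderedPairs_le (m : ℕ) : ((orderedPairs m).card : ℝ) ≤ m ^ 2 := by
  have := Finset.card_filter_le (Finset.univ : Finset (Fin m × Fin m)) fun p => p.1 < p.2
  exact_mod_cast this.trans (by simp [sq])

theorem neg_sum_log_le_potentialEnergy (hh : ∀ i k, 0 ≤ h i k) (X : Configuration m) :
    -∑ p ∈ orderedPairs m, Real.log ‖X p.1 - X p.2‖ ≤ potentialEnergy m h X := by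
  rw [potentialEnergy, Finset.mul_sum, ← Finset.sum_neg_distrib]
  gcongr with p
  rw [Real.log_pow]
  nlinarith [hh p.1 p.2, sq_nonneg ‖X p.1 - X p.2‖]

theorem kineticEnergy_nonneg (Y : Configuration m) : 0 ≤ kineticEnergy m Y := by
  unfold kineticEnergy; positivity

noncomputable def speedBound (m : ℕ) (W : ℝ) : ℝ := 2 * |W| + 2 * m ^ 2 + 1

theorem norm_snd_le_of_totalEnergy_le (hh : ∀ i k, 0 ≤ h i k)
    {p : Configuration m × Configuration m} {W : ℝ} (hE : totalEnergy m h p ≤ W) :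
    ‖p.2‖ ≤ ‖p.1‖ + speedBound m W := by
  have hlog : ∑ q ∈ orderedPairs m, Real.log ‖p.1 q.1 - p.1 q.2‖ ≤ m ^ 2 * (2 * ‖p.1‖) := by
    refine (Finset.sum_le_card_nsmul _ _ _ fun q _ =>
      (Real.log_le_self (norm_nonneg _)).trans (norm_sub_le_two_mul_norm p.1 q.1 q.2)).trans ?_
    rw [nsmul_eq_mul]
    gcongr
    exact card_orderedPairs_le m
  have hK : kineticEnergy m p.2 ≤ W + m ^ 2 * (2 * ‖p.1‖) := by
    have := neg_sum_log_le_potentialEnergy hh p.1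
    unfold totalEnergy at hE
    linarith
  refine (pi_norm_le_iff_of_nonneg (by unfold speedBound; positivity)).2 fun i => ?_
  have hi : ‖p.2 i‖ ^ 2 ≤ 2 * kineticEnergy m p.2 := by
    unfold kineticEnergy
    linarith [Finset.single_le_sum (f := fun r => ‖p.2 r‖ ^ 2) (fun r _ => by positivity)
      (Finset.mem_univ i)]
  -- `‖p.2 i‖ ^ 2 ≤ 2 W + 4 m ^ 2 ‖p.1‖ ≤ (‖p.1‖ + c) ^ 2` as `2 c ≥ 4 m ^ 2` and `c ^ 2 ≥ c ≥ 2 W`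
  unfold speedBound
  nlinarith [norm_nonneg p.1, norm_nonneg (p.2 i), le_abs_self W, abs_nonneg W,
    sq_nonneg (m : ℝ)]

theorem speedBound_nonneg (m : ℕ) (W : ℝ) : 0 ≤ speedBound m W := by
  unfold speedBound; positivity

noncomputable def separationBound (m : ℕ) (W R T : ℝ) : ℝ :=
  Real.exp (-(W + m ^ 2 * (2 * gronwallBound R 1 (speedBound m W) T)))

theorem separationBound_pos (m : ℕ) (W R T : ℝ) : 0 < separationBound m W R T :=
  Real.exp_pos _

theorem separationBound_anti (m : ℕ) (W : ℝ) {R : ℝ} (hR : 0 ≤ R) {T T' : ℝ} (hT : T ≤ T') :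
    separationBound m W R T' ≤ separationBound m W R T := by
  unfold separationBound
  gcongr
  exact gronwallBound_mono hR (speedBound_nonneg m W) zero_le_one hT

theorem separationBound_le_norm_sub_of_totalEnergy_le (hh : ∀ i k, 0 ≤ h i k)
    {p : Configuration m × Configuration m} {W R T : ℝ} (hE : totalEnergy m h p ≤ W)
    (hX : ‖p.1‖ ≤ gronwallBound R 1 (speedBound m W) T) {r s : Fin m} (hrs : p.1 r ≠ p.1 s) :
    separationBound m W R T ≤ ‖p.1 r - p.1 s‖ := by
  wlog hlt : r < s generalizing r s
  · rw [norm_sub_rev]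
    exact this hrs.symm ((lt_or_gt_of_ne (ne_of_apply_ne p.1 hrs)).resolve_left hlt)
  set D := 2 * gronwallBound R 1 (speedBound m W) T
  have hD (q : Fin m × Fin m) : Real.log ‖p.1 q.1 - p.1 q.2‖ ≤ D :=
    (Real.log_le_self (norm_nonneg _)).trans
      ((norm_sub_le_two_mul_norm p.1 _ _).trans (by linarith))
  have hD0 : 0 ≤ D := by linarith [norm_nonneg p.1]
  -- a single nonnegative term `D - log ‖x_r - x_s‖` is bounded by the sum over all pairs,
  -- which the energy controls
  have hmem : (r, s) ∈ orderedPairs m := by simp [orderedPairs, hlt]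
  have hsingle := Finset.single_le_sum
    (fun q _ => sub_nonneg.2 (hD q) : ∀ q ∈ orderedPairs m, 0 ≤ D - Real.log ‖p.1 q.1 - p.1 q.2‖)
    hmem
  simp only at hsingle
  rw [Finset.sum_sub_distrib, Finset.sum_const, nsmul_eq_mul] at hsingle
  have hP := neg_sum_log_le_potentialEnergy hh p.1
  have hK := kineticEnergy_nonneg p.2
  have hcard := card_orderedPairs_le m
  have hcardD := mul_le_mul_of_nonneg_right hcard hD0
  unfold totalEnergy at hE
  change Real.exp (-(W + m ^ 2 * D)) ≤ _
  rw [← Real.le_log_iff_exp_le (norm_pos_iff.2 (sub_ne_zero.2 hrs))]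
  linarith

theorem norm_fst_le_gronwallBound_of_newton (hsymm : ∀ i k, h i k = h k i)
    (hh : ∀ i k, 0 ≤ h i k) {γ : ℝ → Configuration m × Configuration m} {a b : ℝ}
    (hγ : ∀ t ∈ Icc a b, HasDerivAt γ (phaseField (force m h) (γ t)) t)
    (hdist : ∀ t ∈ Icc a b, Pairwise fun r s => (γ t).1 r ≠ (γ t).1 s) :
    ∀ t ∈ Icc a b, ‖(γ t).1‖ ≤
      gronwallBound ‖(γ a).1‖ 1 (speedBound m (totalEnergy m h (γ a))) (t - a) := by
  have hE := totalEnergy_eq_of_newton hsymm hγ hdist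
  have hX {t} (ht : t ∈ Icc a b) : HasDerivAt (fun s => (γ s).1) (γ t).2 t :=
    (hasFDerivAt_fst (𝕜 := ℝ) (p := γ t)).comp_hasDerivAt t (hγ t ht)
  refine norm_le_gronwallBound_of_norm_deriv_right_le (f' := fun t => (γ t).2)
    (fun t ht => (hX ht).continuousAt.continuousWithinAt)
    (fun t ht => (hX (Ico_subset_Icc_self ht)).hasDerivWithinAt) le_rfl fun t ht => ?_
  rw [one_mul]
  exact norm_snd_le_of_totalEnergy_le hh (hE t (Ico_subset_Icc_self ht)).le

theorem separationBound_le_norm_sub_of_newton (hsymm : ∀ i k, h i k = h k i)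
    (hh : ∀ i k, 0 ≤ h i k) {γ : ℝ → Configuration m × Configuration m} {t₀ u T : ℝ}
    (hu : u ∈ Icc t₀ (t₀ + T))
    (hγ : ∀ t ∈ Icc t₀ u, HasDerivAt γ (phaseField (force m h) (γ t)) t)
    (hdist : ∀ t ∈ Icc t₀ u, Pairwise fun r s => (γ t).1 r ≠ (γ t).1 s) :
    Pairwise fun r s =>
      separationBound m (totalEnergy m h (γ t₀)) ‖(γ t₀).1‖ T ≤ ‖(γ u).1 r - (γ u).1 s‖ := by
  have hu' : u ∈ Icc t₀ u := ⟨hu.1, le_rfl⟩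
  refine fun r s hrs => separationBound_le_norm_sub_of_totalEnergy_le hh
    (totalEnergy_eq_of_newton hsymm hγ hdist u hu').le
    ((norm_fst_le_gronwallBound_of_newton hsymm hh hγ hdist u hu').trans ?_) (hdist u hu' hrs)
  exact gronwallBound_mono (norm_nonneg _) (speedBound_nonneg _ _) zero_le_one (by linarith [hu.2])

theorem phaseField_cutoffForce_eq {ε : ℝ} {p : Configuration m × Configuration m}
    (hp : Pairwise fun r s => ε ≤ ‖p.1 r - p.1 s‖) :
    phaseField (cutoffForce m h ε) p = phaseField (force m h) p := by
  rw [phaseField, phaseField, cutoffForce_eq_force hp]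

theorem IsIntegralCurve.separationBound_le_norm_sub (hsymm : ∀ i k, h i k = h k i)
    (hh : ∀ i k, 0 ≤ h i k) {ε T t₀ : ℝ} {γ : ℝ → Configuration m × Configuration m}
    (hγ : IsIntegralCurve γ fun _ => phaseField (cutoffForce m h ε))
    (hε : 0 < ε) (hT : 0 ≤ T) (hεδ : ε < separationBound m (totalEnergy m h (γ t₀)) ‖(γ t₀).1‖ T)
    (h₀ : Pairwise fun r s => (γ t₀).1 r ≠ (γ t₀).1 s) :
    ∀ t ∈ Icc t₀ (t₀ + T), Pairwise fun r s =>
      separationBound m (totalEnergy m h (γ t₀)) ‖(γ t₀).1‖ T ≤ ‖(γ t).1 r - (γ t).1 s‖ := by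
  set δ := separationBound m (totalEnergy m h (γ t₀)) ‖(γ t₀).1‖ T
  have hX : Continuous fun t => (γ t).1 := continuous_fst.comp hγ.continuous
  -- While the points stay `ε`-apart the truncated system is the true one, so the a priori
  -- bound applies; by continuity they then stay `δ`-apart with `δ > ε`.
  refine Icc_subset_of_bootstrap (isClosed_setOf_pairwise_le_norm_sub hX δ)
    (isOpen_setOf_pairwise_lt_norm_sub hX ε) (fun t ht r s hrs => hεδ.trans_le (ht hrs)) ?_
    fun u hu hO => separationBound_le_norm_sub_of_newton hsymm hh hu
      (fun t ht => phaseField_cutoffForce_eq (fun r s hrs => (hO ht hrs).le) ▸ hγ t)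
      fun t ht => Pairwise.ne_of_le_norm_sub hε fun r s hrs => (hO ht hrs).le
  exact fun r s hrs => separationBound_le_norm_sub_of_totalEnergy_le hh le_rfl (by
    simpa only [gronwallBound_x0] using
      gronwallBound_mono (norm_nonneg _) (speedBound_nonneg _ _) zero_le_one hT) (h₀ hrs)

theorem totalEnergy_neg_snd (p : Configuration m × Configuration m) :
    totalEnergy m h (p.1, -p.2) = totalEnergy m h p := by
  simp [totalEnergy, kineticEnergy]

theorem exists_newton_solution_Icc (hsymm : ∀ i k, h i k = h k i) (hh : ∀ i k, 0 ≤ h i k)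
    (t₀ : ℝ) {T : ℝ} (hT : 0 ≤ T) (p₀ : Configuration m × Configuration m)
    (h₀ : Pairwise fun r s => p₀.1 r ≠ p₀.1 s) :
    ∃ γ : ℝ → Configuration m × Configuration m, γ t₀ = p₀ ∧ ∀ t ∈ Icc (t₀ - T) (t₀ + T),
      HasDerivAt γ (phaseField (force m h) (γ t)) t ∧
      Pairwise fun r s =>
        separationBound m (totalEnergy m h p₀) ‖p₀.1‖ T ≤ ‖(γ t).1 r - (γ t).1 s‖ := by
  set δ := separationBound m (totalEnergy m h p₀) ‖p₀.1‖ T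
  have hδ : 0 < δ := separationBound_pos _ _ _ _
  obtain ⟨K, hK⟩ := exists_lipschitzWith_phaseField_cutoffForce (m := m) (h := h) (half_pos hδ)
  obtain ⟨γ, hγ₀, hγ⟩ := hK.exists_isIntegralCurve t₀ p₀
  have hfwd := hγ.separationBound_le_norm_sub hsymm hh (half_pos hδ) hT
    (by rw [hγ₀]; exact half_lt_self hδ) (hγ₀ ▸ h₀)
  have hbwd := hγ.phaseField_reverse.separationBound_le_norm_sub (t₀ := -t₀) hsymm hh
    (half_pos hδ) hT (by simp only [neg_neg, hγ₀, totalEnergy_neg_snd]; exact half_lt_self hδ)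
    (by simpa [hγ₀] using h₀)
  simp only [neg_neg, hγ₀, totalEnergy_neg_snd] at hfwd hbwd
  refine ⟨γ, hγ₀, fun t ht => ?_⟩
  have hsep : Pairwise fun r s => δ ≤ ‖(γ t).1 r - (γ t).1 s‖ := by
    rcases le_total t₀ t with htt | htt
    · exact hfwd t ⟨htt, ht.2⟩
    · simpa using hbwd (-t) ⟨by linarith, by linarith [ht.1]⟩
  exact ⟨phaseField_cutoffForce_eq (fun r s hrs => (half_lt_self hδ).le.trans (hsep hrs)) ▸ hγ t,
    hsep⟩

theorem eqOn_of_newton_of_pairwise_le {ε : ℝ} (hε : 0 < ε)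
    {γ₁ γ₂ : ℝ → Configuration m × Configuration m} {a b t₀ : ℝ} (ht₀ : t₀ ∈ Ioo a b)
    (hγ₁ : ∀ t ∈ Ioo a b, HasDerivAt γ₁ (phaseField (force m h) (γ₁ t)) t ∧
      Pairwise fun r s => ε ≤ ‖(γ₁ t).1 r - (γ₁ t).1 s‖)
    (hγ₂ : ∀ t ∈ Ioo a b, HasDerivAt γ₂ (phaseField (force m h) (γ₂ t)) t ∧
      Pairwise fun r s => ε ≤ ‖(γ₂ t).1 r - (γ₂ t).1 s‖)
    (heq : γ₁ t₀ = γ₂ t₀) : EqOn γ₁ γ₂ (Ioo a b) := by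
  obtain ⟨K, hK⟩ := exists_lipschitzWith_phaseField_cutoffForce (m := m) (h := h) hε
  refine ODE_solution_unique_of_mem_Ioo (v := fun _ => phaseField (cutoffForce m h ε))
    (s := fun _ => univ) (fun _ _ => hK.lipschitzOnWith) ht₀
    (fun t ht => ⟨?_, trivial⟩) (fun t ht => ⟨?_, trivial⟩) heq
  · exact (phaseField_cutoffForce_eq (hγ₁ t ht).2).symm ▸ (hγ₁ t ht).1
  · exact (phaseField_cutoffForce_eq (hγ₂ t ht).2).symm ▸ (hγ₂ t ht).1

theorem exists_newton_solution (hsymm : ∀ i k, h i k = h k i) (hh : ∀ i k, 0 ≤ h i k)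
    (t₀ : ℝ) (p₀ : Configuration m × Configuration m) (h₀ : Pairwise fun r s => p₀.1 r ≠ p₀.1 s) :
    ∃ γ : ℝ → Configuration m × Configuration m, γ t₀ = p₀ ∧ ∀ t,
      HasDerivAt γ (phaseField (force m h) (γ t)) t ∧
        Pairwise fun r s => (γ t).1 r ≠ (γ t).1 s := by
  choose γ hγ₀ hγ using fun n : ℕ =>
    exists_newton_solution_Icc hsymm hh t₀ (T := n + 1) (by positivity) p₀ h₀
  have hcover (t : ℝ) : ∃ n : ℕ, t ∈ Ioo (t₀ - (n + 1)) (t₀ + (n + 1)) := by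
    obtain ⟨n, hn⟩ := exists_nat_gt |t - t₀|
    have := abs_lt.1 (hn.trans (lt_add_one (n : ℝ)))
    exact ⟨n, by constructor <;> linarith [this.1, this.2]⟩
  -- on the `i`-th window both solutions stay `separationBound` of the `j`-th window apart
  obtain ⟨F, hF⟩ := exists_forall_eqOn_of_eqOn hcover γ fun i j hij => by
    have hij' : (i : ℝ) + 1 ≤ j + 1 := by gcongr
    refine eqOn_of_newton_of_pairwise_le (separationBound_pos _ _ _ (j + 1))
      ⟨by linarith, by linarith⟩ (fun t ht => ⟨(hγ i t (Ioo_subset_Icc_self ht)).1,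
        fun r s hrs => (separationBound_anti _ _ (norm_nonneg _) hij').trans
          ((hγ i t (Ioo_subset_Icc_self ht)).2 hrs)⟩)
      (fun t ht => hγ j t ⟨by linarith [ht.1], by linarith [ht.2]⟩) ((hγ₀ i).trans (hγ₀ j).symm)
  have hlocal (t : ℝ) : ∃ n : ℕ, F =ᶠ[𝓝 t] γ n ∧ t ∈ Icc (t₀ - (n + 1)) (t₀ + (n + 1)) := by
    obtain ⟨n, hn⟩ := hcover t
    exact ⟨n, (hF n).eventuallyEq_of_mem (isOpen_Ioo.mem_nhds hn), Ioo_subset_Icc_self hn⟩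
  refine ⟨F, ?_, fun t => ?_⟩
  · obtain ⟨n, hFn, -⟩ := hlocal t₀
    exact hFn.eq_of_nhds.trans (hγ₀ n)
  · obtain ⟨n, hFn, hn⟩ := hlocal t
    rw [hFn.eq_of_nhds]
    exact ⟨(hγ n t hn).1.congr_of_eventuallyEq hFn,
      Pairwise.ne_of_le_norm_sub (separationBound_pos _ _ _ _) (hγ n t hn).2⟩

end Model

theorem global_existence_general (m : ℕ) (h : Matrix (Fin m) (Fin m) ℝ)
    (hsymm : ∀ i k, h i k = h k i)
    (h01 : ∀ i k, h i k = 0 ∨ h i k = 1)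
    (t₀ : ℝ) (B V : Fin m → EuclideanSpace ℝ (Fin m))
    (hB : ∀ i k : Fin m, i ≠ k → B i ≠ B k) :
    ∃ X : ℝ → Fin m → EuclideanSpace ℝ (Fin m),
      IsSolution m h Set.univ X ∧ (∀ i, X t₀ i = B i) ∧
        ∀ i, deriv (fun t => X t i) t₀ = V i := by
  have hh (i k : Fin m) : 0 ≤ h i k := by rcases h01 i k with h' | h' <;> simp [h']
  obtain ⟨γ, hγ₀, hγ⟩ := exists_newton_solution hsymm hh t₀ (B, V) fun r s hrs => hB r s hrs
  have hX (i : Fin m) (t : ℝ) : HasDerivAt (fun s => (γ s).1 i) ((γ t).2 i) t :=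
    hasDerivAt_pi.1 ((hasFDerivAt_fst (𝕜 := ℝ) (p := γ t)).comp_hasDerivAt t (hγ t).1) i
  have hV (i : Fin m) : deriv (fun s => (γ s).1 i) = fun t => (γ t).2 i :=
    funext fun t => (hX i t).deriv
  refine ⟨fun t => (γ t).1, ⟨fun t _ i k hik => (hγ t).2 hik,
    fun i t _ => (hX i t).differentiableAt, fun i t _ => ?_⟩,
    fun i => by simp [hγ₀], fun i => by simp [hV, hγ₀]⟩
  rw [hV i]
  exact hasDerivAt_pi.1 ((hasFDerivAt_snd (𝕜 := ℝ) (p := γ t)).comp_hasDerivAt t (hγ t).1) i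

/-- Global existence: for any initial time `t₀`, any initial configuration `B` of pairwise
distinct points of `ℝ^m` and any initial velocities `V`, there is a solution of the system
defined on all of `ℝ` with `x_i(t₀) = b_i` and `x_i′(t₀) = v_i`. -/
theorem global_existence (m : ℕ) (hm : 2 ≤ m) (h : Matrix (Fin m) (Fin m) ℝ)
    (hsymm : ∀ i k, h i k = h k i) (hdiag : ∀ i, h i i = 0)
    (h01 : ∀ i k, h i k = 0 ∨ h i k = 1)
    (t₀ : ℝ) (B V : Fin m → EuclideanSpace ℝ (Fin m))
    (hB : ∀ i k : Fin m, i ≠ k → B i ≠ B k) :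
    ∃ X : ℝ → Fin m → EuclideanSpace ℝ (Fin m),
      IsSolution m h Set.univ X ∧ (∀ i, X t₀ i = B i) ∧
        ∀ i, deriv (fun t => X t i) t₀ = V i :=
  global_existence_general m h hsymm h01 t₀ B V hB
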